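/- Let θ ∈ (0, π/4], t_θ = arccos(sin θ/(1 + sin θ − cos θ)), d_θ = cos t_θ (1 − cos θ), and y_θ = (−sin t_θ sin θ, −cos t_θ sin θ, cos t_θ cos θ). Then cos t_θ (1 − cos θ) = sin θ (1 − cos t_θ), and moreover for γ₂(t) = (0, cos t − 1, −sin t) and γ₄(t) = (cos t − 1, sin t, 0) one has ⟨γ₂(t), y_θ⟩ ≤ 0 < d_θ and ⟨γ₄(t), y_θ⟩ ≤ 0 < d_θ for all t ∈ [0, π/4]. -/

import Mathlib

/-! With `x = cos t_θ = sin θ / (1 + sin θ - cos θ) ∈ (0, 1]` the identity is just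
`x (1 + sin θ - cos θ) = sin θ`. Both inner products factor,
`⟪γ₂ t, y_θ⟫ = -x (cos θ sin t - sin θ (1 - cos t))` and
`⟪γ₄ t, y_θ⟫ = -sin θ (cos t_θ sin t - sin t_θ (1 - cos t))`, and each bracket is nonnegative
since `1 - cos t ≤ sin t` on `[0, π/2]` and `sin ≤ cos` both at `θ` and at `t_θ`. At `t_θ` this
means `2 x² ≥ 1`, which clears denominators to `(cos θ - sin θ) (1 - cos θ) ≥ 0`. -/

open Real Set RealInnerProductSpace

noncomputable def vec3 (a b c : ℝ) : EuclideanSpace ℝ (Fin 3) :=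
  (WithLp.equiv 2 (Fin 3 → ℝ)).symm ![a, b, c]

noncomputable def γ₁ (t : ℝ) : EuclideanSpace ℝ (Fin 3) := vec3 0 (-sin t) (cos t - 1)
noncomputable def γ₂ (t : ℝ) : EuclideanSpace ℝ (Fin 3) := vec3 0 (cos t - 1) (-sin t)
noncomputable def γ₃ (t : ℝ) : EuclideanSpace ℝ (Fin 3) := vec3 (-sin t) (1 - cos t) 0
noncomputable def γ₄ (t : ℝ) : EuclideanSpace ℝ (Fin 3) := vec3 (cos t - 1) (sin t) 0

noncomputable def tθ (θ : ℝ) : ℝ := arccos (sin θ / (1 + sin θ - cos θ))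

noncomputable def yθ (θ : ℝ) : EuclideanSpace ℝ (Fin 3) :=
  vec3 (-(sin (tθ θ) * sin θ)) (-(cos (tθ θ) * sin θ)) (cos (tθ θ) * cos θ)

noncomputable def dθ (θ : ℝ) : ℝ := cos (tθ θ) * (1 - cos θ)

lemma sin_le_cos_of_le_pi_div_four {θ : ℝ} (h0 : 0 ≤ θ) (h : θ ≤ π / 4) : sin θ ≤ cos θ := by
  rw [← sin_pi_div_two_sub]
  exact sin_le_sin_of_le_of_le_pi_div_two (by linarith) (by linarith) (by linarith)

lemma one_sub_cos_le_sin {t : ℝ} (h0 : 0 ≤ t) (h : t ≤ π / 2) : 1 - cos t ≤ sin t := by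
  have hs : 0 ≤ sin t := sin_nonneg_of_nonneg_of_le_pi h0 (by linarith)
  have hc : 0 ≤ cos t := cos_nonneg_of_mem_Icc ⟨by linarith, h⟩
  nlinarith [sin_sq_add_cos_sq t, cos_le_one t]

lemma mul_one_sub_cos_le_mul_sin {a b t : ℝ} (ha : 0 ≤ a) (hab : a ≤ b) (h0 : 0 ≤ t)
    (h : t ≤ π / 2) : a * (1 - cos t) ≤ b * sin t :=
  calc a * (1 - cos t) ≤ a * sin t := mul_le_mul_of_nonneg_left (one_sub_cos_le_sin h0 h) ha
    _ ≤ b * sin t := mul_le_mul_of_nonneg_right hab (sin_nonneg_of_nonneg_of_le_pi h0 (by linarith))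

lemma sin_arccos_le_self {x : ℝ} (hx : 0 ≤ x) (h : 1 - x ^ 2 ≤ x ^ 2) : sin (arccos x) ≤ x := by
  rw [sin_arccos, sqrt_le_left hx]
  exact h

lemma inner_vec3 (a b c a' b' c' : ℝ) :
    ⟪vec3 a b c, vec3 a' b' c'⟫ = a * a' + b * b' + c * c' := by
  simp only [vec3, PiLp.inner_apply, WithLp.equiv_symm_apply, Fin.sum_univ_three,
    Matrix.cons_val_zero, Matrix.cons_val_one, Matrix.cons_val_two, Matrix.head_cons,
    Matrix.tail_cons, RCLike.inner_apply, conj_trivial]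
  ring

section

variable {θ : ℝ}

lemma cos_tθ (hs : 0 < sin θ) : cos (tθ θ) = sin θ / (1 + sin θ - cos θ) := by
  have hD : 0 < 1 + sin θ - cos θ := by linarith [cos_le_one θ]
  refine cos_arccos (by linarith [div_pos hs hD]) ?_
  rw [div_le_one hD]
  linarith [cos_le_one θ]

lemma cos_tθ_pos (hs : 0 < sin θ) : 0 < cos (tθ θ) := by
  rw [cos_tθ hs]
  exact div_pos hs (by linarith [cos_le_one θ])

lemma cos_tθ_mul_one_sub_cos (hs : 0 < sin θ) :
    cos (tθ θ) * (1 - cos θ) = sin θ * (1 - cos (tθ θ)) := by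
  have hD : 1 + sin θ - cos θ ≠ 0 := by linarith [cos_le_one θ]
  rw [cos_tθ hs]
  field_simp
  ring

lemma sin_tθ_le_cos_tθ (hs : 0 < sin θ) (hsc : sin θ ≤ cos θ) : sin (tθ θ) ≤ cos (tθ θ) := by
  have hD : 0 < 1 + sin θ - cos θ := by linarith [cos_le_one θ]
  rw [cos_tθ hs, tθ]
  refine sin_arccos_le_self (div_pos hs hD).le ?_
  rw [div_pow, sub_le_iff_le_add, ← add_div, le_div_iff₀ (by positivity)]
  nlinarith [sin_sq_add_cos_sq θ, cos_le_one θ]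

lemma dθ_pos (hs : 0 < sin θ) (hc : cos θ < 1) : 0 < dθ θ :=
  mul_pos (cos_tθ_pos hs) (sub_pos.2 hc)

lemma inner_γ₂_yθ (t : ℝ) :
    ⟪γ₂ t, yθ θ⟫ = -(cos (tθ θ) * (cos θ * sin t - sin θ * (1 - cos t))) := by
  rw [γ₂, yθ, inner_vec3]
  ring

lemma inner_γ₄_yθ (t : ℝ) :
    ⟪γ₄ t, yθ θ⟫ = -(sin θ * (cos (tθ θ) * sin t - sin (tθ θ) * (1 - cos t))) := by
  rw [γ₄, yθ, inner_vec3]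
  ring

end

theorem stmt_15 (θ : ℝ) (hθ : θ ∈ Ioc (0 : ℝ) (π / 4)) :
    cos (tθ θ) * (1 - cos θ) = sin θ * (1 - cos (tθ θ)) ∧
    ∀ t ∈ Icc (0 : ℝ) (π / 4),
      (⟪γ₂ t, yθ θ⟫ ≤ 0 ∧ 0 < dθ θ) ∧ (⟪γ₄ t, yθ θ⟫ ≤ 0 ∧ 0 < dθ θ) := by
  obtain ⟨h0, h4⟩ := hθ
  have hs : 0 < sin θ := sin_pos_of_pos_of_lt_pi h0 (by linarith [pi_pos])
  have hsc : sin θ ≤ cos θ := sin_le_cos_of_le_pi_div_four h0.le h4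
  have hc : cos θ < 1 := by
    simpa using cos_lt_cos_of_nonneg_of_le_pi le_rfl (by linarith [pi_pos]) h0
  have hd := dθ_pos hs hc
  refine ⟨cos_tθ_mul_one_sub_cos hs, fun t ⟨ht0, ht4⟩ => ⟨⟨?_, hd⟩, ⟨?_, hd⟩⟩⟩
  · rw [inner_γ₂_yθ, neg_nonpos]
    exact mul_nonneg (cos_tθ_pos hs).le
      (sub_nonneg.2 (mul_one_sub_cos_le_mul_sin hs.le hsc ht0 (by linarith)))
  · rw [inner_γ₄_yθ, neg_nonpos]
    exact mul_nonneg hs.le (sub_nonneg.2 (mul_one_sub_cos_le_mul_sin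
      (sin_nonneg_of_nonneg_of_le_pi (arccos_nonneg _) (arccos_le_pi _))
      (sin_tθ_le_cos_tθ hs hsc) ht0 (by linarith)))
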